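/- If the vMDP is regular, then all basic feasible solutions of the state-action frequency linear program are non-degenerate: each contains exactly m = S·T nonzero components. -/

import Mathlib

open Finset

/-- A finite-horizon MDP with `N` states, horizon `T` (epochs `0,…,T-1`, so `T ≥ 2` has at
least one decision epoch), action sets `Fin (k s)` for each state `s`, and transition
probabilities `p t s a j = p_t(j | s, a)` governing the move from epoch `t` to `t+1`,
together with a strictly positive initial distribution `α`. -/
structure MDP (N T : ℕ) (k : Fin N → ℕ) : Type where
  p : ℕ → (s : Fin N) → Fin (k s) → Fin N → ℝ
  α : Fin N → ℝ
  p_nonneg : ∀ t s a j, 0 ≤ p t s a j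
  p_sum : ∀ t s a, ∑ j, p t s a j = 1
  α_pos : ∀ s, 0 < α s
  α_sum : ∑ s, α s = 1

/-- A (randomized, Markov, non-stationary) policy: `q t s a` is the probability that
action `a` is chosen in state `s` at decision epoch `t`. -/
structure Policy (N : ℕ) (k : Fin N → ℕ) : Type where
  q : ℕ → (s : Fin N) → Fin (k s) → ℝ
  q_nonneg : ∀ t s a, 0 ≤ q t s a
  q_sum : ∀ t s, ∑ a, q t s a = 1

variable {N T : ℕ} {k : Fin N → ℕ}

/-- `condProb M π j t s` is `P^π(S_t = s | S_0 = j)` (epochs indexed from 0). -/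
def condProb (M : MDP N T k) (π : Policy N k) (j : Fin N) : ℕ → Fin N → ℝ
  | 0, s => if s = j then 1 else 0
  | t+1, s => ∑ s', ∑ a, condProb M π j t s' * π.q t s' a * M.p t s' a s

/-- The state-action frequency `x_{π,t}(s,a) = ∑_j α(j) P^π(S_t = s, A_t = a | S_0 = j)`
(epochs indexed from 0, so the decision epochs are `0,…,T-2`). -/
def xsa (M : MDP N T k) (π : Policy N k) (t : ℕ) (s : Fin N) (a : Fin (k s)) : ℝ :=
  ∑ j, M.α j * condProb M π j t s * π.q t s a

/-- The terminal state frequency `x_{π,T}(s)` (terminal epoch is `T-1` in 0-based indexing). -/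
def xT (M : MDP N T k) (π : Policy N k) (s : Fin N) : ℝ :=
  ∑ j, M.α j * condProb M π j (T-1) s

variable (TT : ℕ)

/-- The finite-dimensional space housing state-action frequency vectors for a horizon
`TT + 2` process: a component `x.1 t s a` for every decision epoch `t ∈ {0,…,TT}`, state
`s` and action `a`, and a terminal component `x.2 s` for every state `s`. -/
abbrev FreqSpace (N : ℕ) (k : Fin N → ℕ) (TT : ℕ) : Type :=
  (Fin (TT+1) → (s : Fin N) → Fin (k s) → ℝ) × (Fin N → ℝ)

/-- Membership in the state-action frequency polytope `P`: nonnegativity together with the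
initial condition (a), flow conservation (b), and the terminal condition (c). -/
def inP {N : ℕ} {k : Fin N → ℕ} {TT : ℕ} (M : MDP N (TT+2) k)
    (x : FreqSpace N k TT) : Prop :=
  (∀ t s a, 0 ≤ x.1 t s a) ∧ (∀ s, 0 ≤ x.2 s) ∧
  (∀ j, ∑ a, x.1 0 j a = M.α j) ∧
  (∀ (t : Fin TT) (j : Fin N),
    ∑ a, x.1 t.succ j a = ∑ s, ∑ a, M.p (t : ℕ) s a j * x.1 t.castSucc s a) ∧
  (∀ j, x.2 j = ∑ s, ∑ a, M.p TT s a j * x.1 (Fin.last TT) s a)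

/-- The state-action frequency polytope `P`. -/
def Pset {N : ℕ} {k : Fin N → ℕ} {TT : ℕ} (M : MDP N (TT+2) k) :
    Set (FreqSpace N k TT) :=
  {x | inP M x}

/-- The state-action frequency vector `x_π` of a policy, as a point of `FreqSpace`. -/
def xvec {N : ℕ} {k : Fin N → ℕ} {TT : ℕ} (M : MDP N (TT+2) k) (π : Policy N k) :
    FreqSpace N k TT :=
  (fun t s a => xsa M π (t : ℕ) s a, fun s => xT M π s)

/-- The process is regular when every policy can reach every state at every epoch. -/
def RegularProcess {N : ℕ} {k : Fin N → ℕ} {TT : ℕ} (M : MDP N (TT+2) k) : Prop :=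
  ∀ (π : Policy N k) (t : ℕ) (s : Fin N), t ≤ TT + 1 → ∃ j, 0 < condProb M π j t s

/-- A policy is deterministic (up to the horizon) if at every decision epoch and state it
puts probability one on a single action. -/
def Deterministic {N : ℕ} (k : Fin N → ℕ) (TT : ℕ) (π : Policy N k) : Prop :=
  ∀ t s, t ≤ TT → ∃ a, π.q t s a = 1

/-- A policy is regular if at every decision epoch and every state unreachable there, it
puts full mass on the first action. -/
def RegularPol {N : ℕ} {k : Fin N → ℕ} {TT : ℕ} (M : MDP N (TT+2) k)
    (hk : ∀ s, 1 ≤ k s) (π : Policy N k) : Prop :=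
  ∀ t s, t ≤ TT → (∀ j, condProb M π j t s = 0) → π.q t s ⟨0, hk s⟩ = 1



/-!
Every point `x` of `P` is the frequency vector of the policy that plays the normalized rows of
`x`, and the frequency vector of a policy depends affinely on its decision rule at any single
epoch (earlier distributions do not see the change, later ones propagate it linearly). So if a
vertex had two nonzero actions at some `(t, s)`, splitting that decision rule into two would
write the vertex as a proper convex combination of two points of `P`. Hence every row of a
vertex has at most one nonzero entry; regularity makes every row sum, and every terminal
frequency, positive, so each row has exactly one.
-/

section Simplex

variable {ι : Type*} [Fintype ι] [DecidableEq ι]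

theorem exists_eq_single_of_mem_extremePoints_stdSimplex {R : Type*} [Field R] [LinearOrder R]
    [IsStrictOrderedRing R] {v : ι → R} (hv : v ∈ (stdSimplex R ι).extremePoints R) :
    ∃ i, v = Pi.single i 1 := by
  rw [← convexHull_rangle_single_eq_stdSimplex] at hv
  obtain ⟨i, hi⟩ := extremePoints_convexHull_subset hv
  exact ⟨i, hi.symm⟩

noncomputable def normalizeOrSingle (v : ι → ℝ) (i₀ : ι) : ι → ℝ :=
  if ∑ i, v i = 0 then Pi.single i₀ 1 else (∑ i, v i)⁻¹ • v

variable {v : ι → ℝ}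

theorem normalizeOrSingle_mem_stdSimplex (hv : 0 ≤ v) (i₀ : ι) :
    normalizeOrSingle v i₀ ∈ stdSimplex ℝ ι := by
  unfold normalizeOrSingle
  split_ifs with h
  · exact single_mem_stdSimplex ℝ i₀
  · refine ⟨fun i => smul_nonneg (inv_nonneg.2 (sum_nonneg fun j _ => hv j)) (hv i), ?_⟩
    simp only [Pi.smul_apply, smul_eq_mul, ← mul_sum, inv_mul_cancel₀ h]

theorem sum_smul_normalizeOrSingle (hv : 0 ≤ v) (i₀ : ι) :
    (∑ i, v i) • normalizeOrSingle v i₀ = v := by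
  unfold normalizeOrSingle
  split_ifs with h
  · have hv0 : v = 0 :=
      funext fun i => (sum_eq_zero_iff_of_nonneg fun j _ => hv j).1 h i (mem_univ i)
    simp [hv0]
  · rw [smul_inv_smul₀ h]

end Simplex

namespace Policy

variable {N : ℕ} {k : Fin N → ℕ}

theorem q_mem_stdSimplex (π : Policy N k) (t : ℕ) (s : Fin N) :
    π.q t s ∈ stdSimplex ℝ (Fin (k s)) :=
  ⟨π.q_nonneg t s, π.q_sum t s⟩

def ofStdSimplex (q : ℕ → (s : Fin N) → Fin (k s) → ℝ)
    (hq : ∀ t s, q t s ∈ stdSimplex ℝ (Fin (k s))) : Policy N k where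
  q := q
  q_nonneg t s := (hq t s).1
  q_sum t s := (hq t s).2

def update (π : Policy N k) (t₀ : ℕ) (s₀ : Fin N) (r : Fin (k s₀) → ℝ)
    (hr : r ∈ stdSimplex ℝ (Fin (k s₀))) : Policy N k :=
  ofStdSimplex (Function.update π.q t₀ (Function.update (π.q t₀) s₀ r)) fun t s => by
    rcases eq_or_ne t t₀ with rfl | ht
    · rcases eq_or_ne s s₀ with rfl | hs
      · simpa using hr
      · simpa [hs] using π.q_mem_stdSimplex t s
    · simpa [ht] using π.q_mem_stdSimplex t s

variable {π : Policy N k} {t₀ : ℕ} {s₀ : Fin N} {r : Fin (k s₀) → ℝ}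
  {hr : r ∈ stdSimplex ℝ (Fin (k s₀))}

@[simp]
theorem update_q_self : (π.update t₀ s₀ r hr).q t₀ s₀ = r := by
  simp [update, ofStdSimplex]

theorem update_q_of_ne {t : ℕ} (ht : t ≠ t₀) : (π.update t₀ s₀ r hr).q t = π.q t := by
  simp [update, ofStdSimplex, ht]

theorem update_q_of_ne_state {s : Fin N} (hs : s ≠ s₀) :
    (π.update t₀ s₀ r hr).q t₀ s = π.q t₀ s := by
  simp [update, ofStdSimplex, hs]

end Policy

section Mixture

variable {N T : ℕ} {k : Fin N → ℕ}

theorem condProb_congr (M : MDP N T k) {π π' : Policy N k} (j : Fin N) {t : ℕ}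
    (h : ∀ t' < t, π.q t' = π'.q t') : condProb M π j t = condProb M π' j t := by
  induction t with
  | zero => rfl
  | succ t ih =>
    funext s
    simp only [condProb, ih fun t' ht' => h t' (by omega), h t (by omega)]

structure IsMixtureAt (t₀ : ℕ) (lam mu : ℝ) (π₁ π₂ π : Policy N k) : Prop where
  add_eq_one : lam + mu = 1
  left_eq : ∀ t ≠ t₀, π₁.q t = π.q t
  right_eq : ∀ t ≠ t₀, π₂.q t = π.q t
  mix : ∀ s a, lam * π₁.q t₀ s a + mu * π₂.q t₀ s a = π.q t₀ s a

namespace IsMixtureAt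

variable {t₀ : ℕ} {lam mu : ℝ} {π₁ π₂ π : Policy N k}

theorem mix_apply (h : IsMixtureAt t₀ lam mu π₁ π₂ π) (t : ℕ) (s : Fin N) (a : Fin (k s)) :
    lam * π₁.q t s a + mu * π₂.q t s a = π.q t s a := by
  rcases eq_or_ne t t₀ with rfl | ht
  · exact h.mix s a
  · rw [h.left_eq t ht, h.right_eq t ht, ← add_mul, h.add_eq_one, one_mul]

theorem condProb_left_eq (h : IsMixtureAt t₀ lam mu π₁ π₂ π) (M : MDP N T k) (j : Fin N)
    {t : ℕ} (ht : t ≤ t₀) : condProb M π₁ j t = condProb M π j t :=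
  condProb_congr M j fun t' ht' => h.left_eq t' (by omega)

theorem condProb_right_eq (h : IsMixtureAt t₀ lam mu π₁ π₂ π) (M : MDP N T k) (j : Fin N)
    {t : ℕ} (ht : t ≤ t₀) : condProb M π₂ j t = condProb M π j t :=
  condProb_congr M j fun t' ht' => h.right_eq t' (by omega)

/-- Up to epoch `t₀` the three state distributions coincide, so the mixture of decision rules
passes through; after `t₀` the decision rules coincide, so the mixture of distributions does. -/
theorem condProb_mul_q (h : IsMixtureAt t₀ lam mu π₁ π₂ π) (M : MDP N T k) (j : Fin N)
    {t : ℕ} (hcp : ∀ s, lam * condProb M π₁ j t s + mu * condProb M π₂ j t s = condProb M π j t s)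
    (s : Fin N) (a : Fin (k s)) :
    lam * (condProb M π₁ j t s * π₁.q t s a) + mu * (condProb M π₂ j t s * π₂.q t s a) =
      condProb M π j t s * π.q t s a := by
  rcases le_or_gt t t₀ with ht | ht
  · rw [h.condProb_left_eq M j ht, h.condProb_right_eq M j ht, ← h.mix_apply t s a]
    ring
  · rw [h.left_eq t ht.ne', h.right_eq t ht.ne', ← hcp s]
    ring

theorem condProb (h : IsMixtureAt t₀ lam mu π₁ π₂ π) (M : MDP N T k) (j : Fin N) (t : ℕ)
    (s : Fin N) :
    lam * condProb M π₁ j t s + mu * condProb M π₂ j t s = condProb M π j t s := by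
  induction t generalizing s with
  | zero =>
    simp only [_root_.condProb, ← add_mul, h.add_eq_one, one_mul]
  | succ t ih =>
    simp only [_root_.condProb, mul_sum, ← sum_add_distrib]
    refine sum_congr rfl fun s' _ => sum_congr rfl fun a _ => ?_
    linear_combination M.p t s' a s * h.condProb_mul_q M j ih s' a

theorem xvec {TT : ℕ} (h : IsMixtureAt t₀ lam mu π₁ π₂ π) (M : MDP N (TT + 2) k) :
    lam • xvec M π₁ + mu • xvec M π₂ = xvec M π := by
  refine Prod.ext (funext fun t => funext fun s => funext fun a => ?_) (funext fun s => ?_)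
  · simp only [_root_.xvec, xsa, Prod.fst_add, Prod.smul_fst, Pi.add_apply, Pi.smul_apply,
      smul_eq_mul, mul_sum, ← sum_add_distrib]
    refine sum_congr rfl fun j _ => ?_
    linear_combination M.α j * h.condProb_mul_q M j (h.condProb M j t) s a
  · simp only [_root_.xvec, xT, Prod.snd_add, Prod.smul_snd, Pi.add_apply, Pi.smul_apply,
      smul_eq_mul, mul_sum, ← sum_add_distrib]
    refine sum_congr rfl fun j _ => ?_
    linear_combination M.α j * h.condProb M j _ s

end IsMixtureAt

theorem Policy.isMixtureAt_update (π : Policy N k) {t₀ : ℕ} {s₀ : Fin N}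
    {r₁ r₂ : Fin (k s₀) → ℝ} (hr₁ : r₁ ∈ stdSimplex ℝ (Fin (k s₀)))
    (hr₂ : r₂ ∈ stdSimplex ℝ (Fin (k s₀))) {lam mu : ℝ} (hlm : lam + mu = 1)
    (hmix : lam • r₁ + mu • r₂ = π.q t₀ s₀) :
    IsMixtureAt t₀ lam mu (π.update t₀ s₀ r₁ hr₁) (π.update t₀ s₀ r₂ hr₂) π where
  add_eq_one := hlm
  left_eq _ ht := Policy.update_q_of_ne ht
  right_eq _ ht := Policy.update_q_of_ne ht
  mix s a := by
    rcases eq_or_ne s s₀ with rfl | hs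
    · simpa using congr_fun hmix a
    · rw [Policy.update_q_of_ne_state hs, Policy.update_q_of_ne_state hs, ← add_mul, hlm,
        one_mul]

end Mixture

section StateFrequency

variable {N T : ℕ} {k : Fin N → ℕ}

theorem condProb_nonneg (M : MDP N T k) (π : Policy N k) (j : Fin N) :
    ∀ t s, 0 ≤ condProb M π j t s
  | 0, s => by unfold condProb; split_ifs <;> norm_num
  | t + 1, s => sum_nonneg fun s' _ => sum_nonneg fun a _ =>
      mul_nonneg (mul_nonneg (condProb_nonneg M π j t s') (π.q_nonneg _ _ _)) (M.p_nonneg _ _ _ _)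

/-- `P^π(S_t = s)` under the initial distribution `α`. -/
def stateFreq (M : MDP N T k) (π : Policy N k) (t : ℕ) (s : Fin N) : ℝ :=
  ∑ j, M.α j * condProb M π j t s

variable (M : MDP N T k) (π : Policy N k)

theorem stateFreq_nonneg (t : ℕ) (s : Fin N) : 0 ≤ stateFreq M π t s :=
  sum_nonneg fun j _ => mul_nonneg (M.α_pos j).le (condProb_nonneg M π j t s)

theorem xsa_eq_stateFreq_mul (t : ℕ) (s : Fin N) (a : Fin (k s)) :
    xsa M π t s a = stateFreq M π t s * π.q t s a := by
  simp only [xsa, stateFreq, sum_mul]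

theorem sum_xsa (t : ℕ) (s : Fin N) : ∑ a, xsa M π t s a = stateFreq M π t s := by
  simp only [xsa_eq_stateFreq_mul, ← mul_sum, π.q_sum, mul_one]

theorem stateFreq_zero (s : Fin N) : stateFreq M π 0 s = M.α s := by
  simp [stateFreq, condProb]

theorem stateFreq_succ (t : ℕ) (s : Fin N) :
    stateFreq M π (t + 1) s = ∑ s', ∑ a, M.p t s' a s * xsa M π t s' a := by
  simp only [stateFreq, condProb, xsa, mul_sum]
  rw [sum_comm]
  refine sum_congr rfl fun s' _ => ?_
  rw [sum_comm]
  refine sum_congr rfl fun a _ => sum_congr rfl fun j _ => ?_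
  ring

theorem xvec_mem_Pset {TT : ℕ} (M : MDP N (TT + 2) k) (π : Policy N k) : xvec M π ∈ Pset M :=
  ⟨fun t s a => show 0 ≤ xsa M π t s a by
      rw [xsa_eq_stateFreq_mul]; exact mul_nonneg (stateFreq_nonneg M π t s) (π.q_nonneg _ _ _),
    fun s => stateFreq_nonneg M π (TT + 1) s,
    fun j => (sum_xsa M π 0 j).trans (stateFreq_zero M π j),
    fun t j => (sum_xsa M π _ j).trans (stateFreq_succ M π t j),
    fun j => stateFreq_succ M π TT j⟩

theorem RegularProcess.stateFreq_pos {TT : ℕ} {M : MDP N (TT + 2) k} (hreg : RegularProcess M)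
    (π : Policy N k) {t : ℕ} (ht : t ≤ TT + 1) (s : Fin N) : 0 < stateFreq M π t s := by
  obtain ⟨j, hj⟩ := hreg π t s ht
  exact sum_pos' (fun i _ => mul_nonneg (M.α_pos i).le (condProb_nonneg M π i t s))
    ⟨j, mem_univ j, mul_pos (M.α_pos j) hj⟩

end StateFrequency

section ExtremePoints

variable {N TT : ℕ} {k : Fin N → ℕ} {M : MDP N (TT + 2) k}

theorem Policy.q_mem_extremePoints_of_xvec {π : Policy N k}
    (hx : xvec M π ∈ (Pset M).extremePoints ℝ) (t : Fin (TT + 1)) (s : Fin N)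
    (hS : 0 < stateFreq M π t s) : π.q t s ∈ (stdSimplex ℝ (Fin (k s))).extremePoints ℝ := by
  refine ⟨π.q_mem_stdSimplex t s, fun r₁ hr₁ r₂ hr₂ ⟨lam, mu, hlam, hmu, hlm, hmix⟩ => ?_⟩
  have hπ := π.isMixtureAt_update hr₁ hr₂ hlm hmix
  have hx₁ : xvec M (π.update t s r₁ hr₁) = xvec M π :=
    hx.2 (xvec_mem_Pset M _) (xvec_mem_Pset M _) ⟨lam, mu, hlam, hmu, hlm, hπ.xvec M⟩
  have hS₁ : stateFreq M (π.update t s r₁ hr₁) t s = stateFreq M π t s := by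
    simp only [stateFreq, hπ.condProb_left_eq M _ le_rfl]
  funext a
  have hxa := congr_fun (congr_fun (congr_fun (congr_arg Prod.fst hx₁) t) s) a
  simp only [xvec, xsa_eq_stateFreq_mul, hS₁, Policy.update_q_self] at hxa
  exact mul_left_cancel₀ hS.ne' hxa

/-- The policy that plays each row of `x`, normalized; rows that vanish, and epochs beyond the
horizon, play action `0`. -/
noncomputable def inducedPolicy (hk : ∀ s, 1 ≤ k s) (x : FreqSpace N k TT)
    (hx : ∀ t s a, 0 ≤ x.1 t s a) : Policy N k :=
  Policy.ofStdSimplex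
    (fun t s => if h : t ≤ TT then normalizeOrSingle (x.1 ⟨t, by omega⟩ s) ⟨0, hk s⟩
      else Pi.single ⟨0, hk s⟩ 1)
    fun t s => by
      split_ifs
      · exact normalizeOrSingle_mem_stdSimplex (hx _ s) _
      · exact single_mem_stdSimplex ℝ _

variable (hk : ∀ s, 1 ≤ k s) {x : FreqSpace N k TT}

theorem sum_smul_inducedPolicy_q (hx : ∀ t s a, 0 ≤ x.1 t s a) (t : Fin (TT + 1)) (s : Fin N) :
    (∑ a, x.1 t s a) • (inducedPolicy hk x hx).q t s = x.1 t s := by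
  simp only [inducedPolicy, Policy.ofStdSimplex, dif_pos (Nat.le_of_lt_succ t.isLt)]
  exact sum_smul_normalizeOrSingle (hx t s) _

theorem xsa_inducedPolicy_of_stateFreq (hx : ∀ t s a, 0 ≤ x.1 t s a) {t : Fin (TT + 1)}
    {s : Fin N} (hS : stateFreq M (inducedPolicy hk x hx) t s = ∑ a, x.1 t s a)
    (a : Fin (k s)) : xsa M (inducedPolicy hk x hx) t s a = x.1 t s a := by
  rw [xsa_eq_stateFreq_mul, hS, ← smul_eq_mul, ← Pi.smul_apply, sum_smul_inducedPolicy_q]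

theorem stateFreq_inducedPolicy (hx : x ∈ Pset M) (t : Fin (TT + 1)) (s : Fin N) :
    stateFreq M (inducedPolicy hk x hx.1) t s = ∑ a, x.1 t s a := by
  induction t using Fin.induction generalizing s with
  | zero => rw [Fin.val_zero, stateFreq_zero, hx.2.2.1]
  | succ t ih =>
    rw [Fin.val_succ, stateFreq_succ, hx.2.2.2.1]
    refine sum_congr rfl fun s' _ => sum_congr rfl fun a _ => ?_
    rw [← xsa_inducedPolicy_of_stateFreq hk hx.1 (ih s') a, Fin.val_castSucc]

theorem xvec_inducedPolicy (hx : x ∈ Pset M) : xvec M (inducedPolicy hk x hx.1) = x := by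
  have hxsa t s a := xsa_inducedPolicy_of_stateFreq hk hx.1 (stateFreq_inducedPolicy hk hx t s) a
  refine Prod.ext (funext fun t => funext fun s => funext fun a => hxsa t s a)
    (funext fun s => ?_)
  change stateFreq M _ (TT + 1) s = x.2 s
  rw [stateFreq_succ, hx.2.2.2.2]
  exact sum_congr rfl fun s' _ => sum_congr rfl fun a _ => by rw [← hxsa, Fin.val_last]

end ExtremePoints

/-- if the vMDP is regular then every basic feasible solution (vertex /
extreme point) of the state-action frequency polytope is non-degenerate: it has exactly
`m = N·(TT+2)` (i.e. `S·T`) nonzero components. -/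
theorem vertex_nondegenerate (N TT : ℕ) (k : Fin N → ℕ) (hk : ∀ s, 1 ≤ k s)
    (M : MDP N (TT+2) k) (hreg : RegularProcess M)
    (x : FreqSpace N k TT) (hx : x ∈ Set.extremePoints ℝ (Pset M)) :
    (∑ t : Fin (TT+1), ∑ s : Fin N, ({a : Fin (k s) | x.1 t s a ≠ 0} : Set _).ncard) +
        ({s : Fin N | x.2 s ≠ 0} : Set _).ncard = N * (TT + 2) := by
  set π := inducedPolicy hk x hx.1.1
  have hxπ : xvec M π = x := xvec_inducedPolicy hk hx.1
  have hrow (t : Fin (TT + 1)) (s : Fin N) : ({a | x.1 t s a ≠ 0} : Set _).ncard = 1 := by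
    have hS := hreg.stateFreq_pos π (t := t) (by omega) s
    obtain ⟨a, ha⟩ := exists_eq_single_of_mem_extremePoints_stdSimplex
      (π.q_mem_extremePoints_of_xvec (hxπ ▸ hx) t s hS)
    rw [stateFreq_inducedPolicy hk hx.1] at hS
    rw [Set.ncard_eq_one]
    refine ⟨a, Set.ext fun b => ?_⟩
    rw [← sum_smul_inducedPolicy_q hk hx.1.1, ha]
    by_cases hb : b = a <;> simp [hb, hS.ne']
  have hterm : {s | x.2 s ≠ 0} = Set.univ := by
    refine Set.eq_univ_of_forall fun s => ?_
    rw [← hxπ]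
    exact (hreg.stateFreq_pos π le_rfl s).ne'
  simp only [hrow, hterm, Set.ncard_univ, Nat.card_eq_fintype_card, Fintype.card_fin, sum_const,
    card_univ, smul_eq_mul, mul_one]
  ring
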